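/- Let (X,d) be a complete metric space and T : X → X be a contractive mapping, and let E, F : (0,∞) → ℝ satisfy condition (C2). If F(d(Tx,Ty)) ≤ E(d(x,y)) for all x,y ∈ X with Tx ≠ Ty, then T is a CJMP-contraction, hence a Picard operator. -/

import Mathlib

/-!
Condition (C2) forces the Matkowski–Węgrzyk condition: if it failed at some `ε`, there would be
pairs with `d(x_n, y_n) ↓ ε` and `ε < d(Tx_n, Ty_n) < d(x_n, y_n)`, and the contractive inequality
`F(d(Tx_n, Ty_n)) ≤ E(d(x_n, y_n))` would make the limsup in (C2) nonpositive.

A contractive map with the Matkowski–Węgrzyk condition is a Meir–Keeler type contraction: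
`d(x, y) < ε + δ` implies `d(Tx, Ty) ≤ ε`. The distance between two orbits then decreases to `0`,
and once consecutive iterates are `δ`-close, the orbit never leaves the `(ε + δ)`-ball around
that iterate, so orbits are Cauchy. The limit of one orbit is a fixed point, and every other
orbit approaches it.
-/

open Filter Topology

/-- `T` is a Picard operator: it has a unique fixed point `u` and every
sequence of iterates converges to `u`. -/
def IsPicardOperator {X : Type*} [MetricSpace X] (T : X → X) : Prop :=
  ∃ u : X, T u = u ∧ (∀ v : X, T v = v → v = u) ∧
    ∀ x : X, Tendsto (fun n => T^[n] x) atTop (𝓝 u)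

/-- `T` is contractive: `d(Tx,Ty) < d(x,y)` whenever `x ≠ y`. -/
def Contractive {X : Type*} [MetricSpace X] (T : X → X) : Prop :=
  ∀ x y : X, x ≠ y → dist (T x) (T y) < dist x y

/-- The Matkowski–Węgrzyk condition. -/
def MWCondition {X : Type*} [MetricSpace X] (T : X → X) : Prop :=
  ∀ ε > (0 : ℝ), ∃ δ > (0 : ℝ), ∀ x y : X,
    ε < dist x y → dist x y < ε + δ → dist (T x) (T y) ≤ ε

/-- `T` is a CJMP-contraction. -/
def IsCJMP {X : Type*} [MetricSpace X] (T : X → X) : Prop :=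
  Contractive T ∧ MWCondition T

/-- Condition (C2). `E` and `F` are defined on `(0, ∞)` in the paper; (C2) only evaluates them
there, so their values on `(-∞, 0]` are irrelevant. -/
def ConditionC2 (E F : ℝ → ℝ) : Prop :=
  ∀ t > (0 : ℝ), ∀ tn : ℕ → ℝ, (∀ n, t < tn n) → Tendsto tn atTop (𝓝 t) →
    ∀ sn : ℕ → ℝ, (∀ n, t < sn n ∧ sn n < tn n) →
      0 < limsup (fun n => F (sn n) - E (tn n)) atTop

section

variable {X : Type*} [MetricSpace X] {T : X → X}

namespace Contractive

theorem dist_le (hT : Contractive T) (x y : X) : dist (T x) (T y) ≤ dist x y := by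
  rcases eq_or_ne x y with rfl | hxy
  · simp
  · exact (hT x y hxy).le

theorem continuous (hT : Contractive T) : Continuous T :=
  (LipschitzWith.of_dist_le_mul (K := 1) fun x y => by simpa using hT.dist_le x y).continuous

theorem eq_of_isFixedPt (hT : Contractive T) {u v : X} (hu : Function.IsFixedPt T u)
    (hv : Function.IsFixedPt T v) : u = v := by
  by_contra huv
  simpa [hu.eq, hv.eq] using hT u v huv

theorem mwCondition_of_conditionC2 (hT : Contractive T) {E F : ℝ → ℝ} (hC2 : ConditionC2 E F)
    (hEF : ∀ x y : X, T x ≠ T y → F (dist (T x) (T y)) ≤ E (dist x y)) : MWCondition T := by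
  intro ε hε
  by_contra! hMW
  choose x y hεd hdε hεTd using fun n : ℕ => hMW (1 / (n + 1)) Nat.one_div_pos_of_nat
  have hd_tendsto : Tendsto (fun n => dist (x n) (y n)) atTop (𝓝 ε) := by
    have hupper : Tendsto (fun n : ℕ => ε + 1 / ((n : ℝ) + 1)) atTop (𝓝 ε) := by
      simpa using tendsto_one_div_add_atTop_nhds_zero_nat.const_add ε
    exact tendsto_of_tendsto_of_tendsto_of_le_of_le tendsto_const_nhds hupper
      (fun n => (hεd n).le) (fun n => (hdε n).le)
  have hTd_lt : ∀ n, ε < dist (T (x n)) (T (y n)) ∧ dist (T (x n)) (T (y n)) < dist (x n) (y n) :=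
    fun n => ⟨hεTd n, hT _ _ (dist_pos.mp (hε.trans (hεd n)))⟩
  have hnonpos : ∀ n, F (dist (T (x n)) (T (y n))) - E (dist (x n) (y n)) ≤ 0 := fun n =>
    sub_nonpos.mpr (hEF _ _ (dist_pos.mp (hε.trans (hεTd n))))
  -- the limsup of a real sequence is an `sInf`, which is `0` if the sequence is unbounded below
  have hlimsup : limsup (fun n => F (dist (T (x n)) (T (y n))) - E (dist (x n) (y n))) atTop
      ≤ 0 := Real.sInf_nonpos' ⟨0, Eventually.of_forall hnonpos, le_rfl⟩
  exact hlimsup.not_gt (hC2 ε hε _ hεd hd_tendsto _ hTd_lt)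

end Contractive

namespace IsCJMP

theorem exists_dist_lt_imp_dist_le (hT : IsCJMP T) {ε : ℝ} (hε : 0 < ε) :
    ∃ δ > 0, ∀ x y : X, dist x y < ε + δ → dist (T x) (T y) ≤ ε := by
  obtain ⟨δ, hδ, hMW⟩ := hT.2 ε hε
  refine ⟨δ, hδ, fun x y hxy => ?_⟩
  rcases le_or_gt (dist x y) ε with hle | hlt
  · exact (hT.1.dist_le x y).trans hle
  · exact hMW x y hlt hxy

theorem tendsto_dist_iterate (hT : IsCJMP T) (x y : X) :
    Tendsto (fun n => dist (T^[n] x) (T^[n] y)) atTop (𝓝 0) := by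
  set a : ℕ → ℝ := fun n => dist (T^[n] x) (T^[n] y)
  have ha_succ : ∀ n, a (n + 1) = dist (T (T^[n] x)) (T (T^[n] y)) := fun n => by
    simp only [a, Function.iterate_succ_apply']
  have ha_anti : Antitone a :=
    antitone_nat_of_succ_le fun n => (ha_succ n).trans_le (hT.1.dist_le _ _)
  have ha_bdd : BddBelow (Set.range a) := ⟨0, by rintro _ ⟨n, rfl⟩; exact dist_nonneg⟩
  set L := ⨅ n, a n
  have hL_le : ∀ n, L ≤ a n := ciInf_le ha_bdd
  have ha_tendsto : Tendsto a atTop (𝓝 L) := tendsto_atTop_ciInf ha_anti ha_bdd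
  suffices hL : L = 0 by rwa [hL] at ha_tendsto
  by_contra hL_ne
  have hL_pos : 0 < L := lt_of_le_of_ne (le_ciInf fun n => dist_nonneg) (Ne.symm hL_ne)
  obtain ⟨δ, hδ, hTδ⟩ := hT.exists_dist_lt_imp_dist_le hL_pos
  obtain ⟨n, hn⟩ := (ha_tendsto.eventually (eventually_lt_nhds (lt_add_of_pos_right L hδ))).exists
  -- `a (n + 1) = L > 0`, so strict contractivity pushes `a (n + 2)` below the infimum
  have hn1 : a (n + 1) = L := le_antisymm ((ha_succ n).trans_le (hTδ _ _ hn)) (hL_le _)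
  have hne : T^[n + 1] x ≠ T^[n + 1] y := dist_pos.mp (hn1.symm ▸ hL_pos : 0 < a (n + 1))
  have hn2 : a (n + 2) < L := (ha_succ (n + 1)).trans_lt (hn1 ▸ hT.1 _ _ hne)
  exact (hL_le (n + 2)).not_gt hn2

theorem cauchySeq_iterate (hT : IsCJMP T) (x : X) : CauchySeq fun n => T^[n] x := by
  rw [Metric.cauchySeq_iff']
  intro ε hε
  obtain ⟨δ, hδ, hTδ⟩ := hT.exists_dist_lt_imp_dist_le (half_pos hε)
  set η := min δ (ε / 2)
  have hη : 0 < η := lt_min hδ (half_pos hε)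
  obtain ⟨N, hN_tail⟩ := Metric.tendsto_atTop.mp (hT.tendsto_dist_iterate x (T x)) η hη
  have hN : dist (T^[N] x) (T^[N + 1] x) < η := by
    simpa [abs_of_nonneg dist_nonneg, Function.iterate_succ_apply] using hN_tail N le_rfl
  have hball : ∀ k, dist (T^[N] x) (T^[N + k] x) < ε / 2 + η := by
    intro k
    induction k with
    | zero => simpa using add_pos (half_pos hε) hη
    | succ k ih =>
      have hT_near : dist (T^[N + 1] x) (T^[N + k + 1] x) ≤ ε / 2 := by
        simp only [Function.iterate_succ_apply']
        exact hTδ _ _ (ih.trans_le (by gcongr; exact min_le_left _ _))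
      calc dist (T^[N] x) (T^[N + (k + 1)] x)
          ≤ dist (T^[N] x) (T^[N + 1] x) + dist (T^[N + 1] x) (T^[N + k + 1] x) :=
            dist_triangle _ _ _
        _ < η + ε / 2 := add_lt_add_of_lt_of_le hN hT_near
        _ = ε / 2 + η := add_comm _ _
  refine ⟨N, fun n hn => ?_⟩
  obtain ⟨k, rfl⟩ := Nat.exists_eq_add_of_le hn
  calc dist (T^[N + k] x) (T^[N] x) = dist (T^[N] x) (T^[N + k] x) := dist_comm _ _
    _ < ε / 2 + η := hball k
    _ ≤ ε / 2 + ε / 2 := by gcongr; exact min_le_right _ _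
    _ = ε := add_halves ε

theorem isPicardOperator [CompleteSpace X] [Nonempty X] (hT : IsCJMP T) :
    IsPicardOperator T := by
  obtain ⟨x₀⟩ := ‹Nonempty X›
  obtain ⟨u, hu⟩ := cauchySeq_tendsto_of_complete (hT.cauchySeq_iterate x₀)
  have hfix : T u = u := isFixedPt_of_tendsto_iterate hu hT.1.continuous.continuousAt
  refine ⟨u, hfix, fun v hv => hT.1.eq_of_isFixedPt hv hfix, fun x => ?_⟩
  rw [tendsto_iff_dist_tendsto_zero]
  simpa only [Function.iterate_fixed hfix] using hT.tendsto_dist_iterate x u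

end IsCJMP

end

theorem stmt_7 {X : Type*} [MetricSpace X] [CompleteSpace X] [Nonempty X] (T : X → X)
    (hT : Contractive T) (E F : ℝ → ℝ)
    (hC2 : ∀ t > (0 : ℝ), ∀ tn : ℕ → ℝ, (∀ n, t < tn n) → Tendsto tn atTop (𝓝 t) →
      ∀ sn : ℕ → ℝ, (∀ n, t < sn n ∧ sn n < tn n) →
        0 < limsup (fun n => F (sn n) - E (tn n)) atTop)
    (hcontr : ∀ x y : X, T x ≠ T y → F (dist (T x) (T y)) ≤ E (dist x y)) :
    IsCJMP T ∧ IsPicardOperator T := by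
  have hCJMP : IsCJMP T := ⟨hT, hT.mwCondition_of_conditionC2 hC2 hcontr⟩
  exact ⟨hCJMP, hCJMP.isPicardOperator⟩
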